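/- (Theorem 4, estimation of Q̂(β₀).) Let c > 1 and c̄ = (c+1)/(c−1). Suppose λ/n ≥ c‖Γ⁻¹S̃‖_∞, κ̃ > 0, and ρ̄ := λ√s/(nκ̃) < 1. Then any square-root lasso minimizer β̂ satisfies −ϱ_c̄‖β̂ − β₀‖_{2,n} ≤ √Q̂(β̂) − √Q̂(β₀) ≤ ρ̄‖β̂ − β₀‖_{2,n}; and consequently −2ϱ_c̄√Q̂(β₀)·(ϱ_c̄ + ρ̄)/(1 − ρ̄²) ≤ √Q̂(β̂) − √Q̂(β₀) ≤ 2ρ̄√Q̂(β₀)·(ϱ_c̄ + ρ̄)/(1 − ρ̄²). -/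

import Mathlib

open Finset MeasureTheory ProbabilityTheory

namespace SqrtLasso

/-- Empirical average `E_n[h_i] = n⁻¹ ∑ᵢ h i`. -/
noncomputable def En (n : ℕ) (h : Fin n → ℝ) : ℝ := (∑ i, h i) / n

/-- Euclidean inner product `a'b = ∑ⱼ aⱼ bⱼ`. -/
noncomputable def dot {p : ℕ} (a b : Fin p → ℝ) : ℝ := ∑ j, a j * b j

/-- Prediction norm `‖δ‖_{2,n} = (E_n[(x_i'δ)²])^{1/2}`. -/
noncomputable def predNorm (n : ℕ) {p : ℕ} (x : Fin n → Fin p → ℝ) (δ : Fin p → ℝ) : ℝ :=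
  Real.sqrt (En n fun i => (dot (x i) δ) ^ 2)

/-- `ℓ₁` norm of a vector. -/
noncomputable def l1 {p : ℕ} (v : Fin p → ℝ) : ℝ := ∑ j, |v j|

/-- Restriction `v_S`: equal to `v` on `S` and `0` outside. -/
def restr {p : ℕ} (S : Finset (Fin p)) (v : Fin p → ℝ) : Fin p → ℝ :=
  fun j => if j ∈ S then v j else 0

/-- `Γ v`, i.e. componentwise rescaling by loadings `γ`. -/
noncomputable def scl {p : ℕ} (γ v : Fin p → ℝ) : Fin p → ℝ := fun j => γ j * v j

/-- The support of a vector. -/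
noncomputable def supp {p : ℕ} (β : Fin p → ℝ) : Finset (Fin p) := Finset.univ.filter fun j => β j ≠ 0

/-- The least-squares criterion `Q̂(β) = E_n[(y_i - x_i'β)²]`. -/
noncomputable def Qhat (n : ℕ) {p : ℕ} (x : Fin n → Fin p → ℝ) (y : Fin n → ℝ)
    (β : Fin p → ℝ) : ℝ := En n fun i => (y i - dot (x i) β) ^ 2

/-- The restricted set `Δ_c̄`. -/
def Delta {p : ℕ} (γ : Fin p → ℝ) (T : Finset (Fin p)) (cb : ℝ) : Set (Fin p → ℝ) :=
  {δ | δ ≠ 0 ∧ l1 (scl γ (restr Tᶜ δ)) ≤ cb * l1 (scl γ (restr T δ))}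

/-- The restricted eigenvalue `κ_c̄`. -/
noncomputable def kappa (n : ℕ) {p : ℕ} (x : Fin n → Fin p → ℝ) (γ : Fin p → ℝ)
    (T : Finset (Fin p)) (cb : ℝ) : ℝ :=
  sInf {r | ∃ δ ∈ Delta γ T cb,
    r = Real.sqrt T.card * predNorm n x δ / l1 (scl γ (restr T δ))}

/-- The quantity `κ̃`. -/
noncomputable def kappaTilde (n : ℕ) {p : ℕ} (x : Fin n → Fin p → ℝ) (γ : Fin p → ℝ)
    (T : Finset (Fin p)) : ℝ :=
  sInf {r | ∃ δ : Fin p → ℝ, l1 (scl γ (restr Tᶜ δ)) < l1 (scl γ (restr T δ)) ∧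
    r = Real.sqrt T.card * predNorm n x δ /
      (l1 (scl γ (restr T δ)) - l1 (scl γ (restr Tᶜ δ)))}

/-- The score `S̃ = E_n[x_i(σε_i + r_i)] / √(E_n[(σε_i + r_i)²])`. -/
noncomputable def score (n : ℕ) {p : ℕ} (x : Fin n → Fin p → ℝ) (ε rr : Fin n → ℝ)
    (σ : ℝ) : Fin p → ℝ :=
  fun j => En n (fun i => x i j * (σ * ε i + rr i)) /
    Real.sqrt (En n fun i => (σ * ε i + rr i) ^ 2)

/-- `‖Γ⁻¹ S̃‖_∞ = max_j |S̃_j| / γ_j`. -/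
noncomputable def scoreSup (n : ℕ) {p : ℕ} (x : Fin n → Fin p → ℝ) (ε rr : Fin n → ℝ)
    (σ : ℝ) (γ : Fin p → ℝ) : ℝ :=
  ⨆ j, |score n x ε rr σ j| / γ j

/-- The quantity `ϱ_c̄`. -/
noncomputable def varrho (n : ℕ) {p : ℕ} (x : Fin n → Fin p → ℝ) (γ : Fin p → ℝ)
    (T : Finset (Fin p)) (β₀ : Fin p → ℝ) (S : Fin p → ℝ) (cb : ℝ) : ℝ :=
  sSup {r | ∃ δ ∈ Delta γ T cb, 0 < predNorm n x δ ∧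
    l1 (scl γ (δ + β₀)) ≤ cb * l1 (scl γ β₀) ∧ r = |dot S δ| / predNorm n x δ}

/-- Quadratic form `δ'Mδ`. -/
noncomputable def quadForm {p : ℕ} (M : Fin p → Fin p → ℝ) (δ : Fin p → ℝ) : ℝ :=
  ∑ j, ∑ k, δ j * M j k * δ k

/-- Maximal `m`-sparse eigenvalue `φ_max(m, M)`. -/
noncomputable def phiMax {p : ℕ} (M : Fin p → Fin p → ℝ) (T : Finset (Fin p)) (m : ℕ) : ℝ :=
  sSup {r | ∃ δ : Fin p → ℝ, δ ≠ 0 ∧ (supp δ \ T).card ≤ m ∧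
    r = quadForm M δ / ∑ j, (δ j) ^ 2}

/-- Minimal `m`-sparse eigenvalue `φ_min(m, M)`. -/
noncomputable def phiMin {p : ℕ} (M : Fin p → Fin p → ℝ) (T : Finset (Fin p)) (m : ℕ) : ℝ :=
  sInf {r | ∃ δ : Fin p → ℝ, δ ≠ 0 ∧ (supp δ \ T).card ≤ m ∧
    r = quadForm M δ / ∑ j, (δ j) ^ 2}

/-- Gram matrix `E_n[x_i x_i']`. -/
noncomputable def gram (n : ℕ) {p : ℕ} (x : Fin n → Fin p → ℝ) : Fin p → Fin p → ℝ :=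
  fun j k => En n fun i => x i j * x i k

/-- Rescaled Gram matrix `Γ⁻¹ E_n[x_i x_i'] Γ⁻¹`. -/
noncomputable def rgram (n : ℕ) {p : ℕ} (x : Fin n → Fin p → ℝ) (γ : Fin p → ℝ) :
    Fin p → Fin p → ℝ :=
  fun j k => gram n x j k / (γ j * γ k)

/-!
Write `δ = β̂ - β₀` and `t = ‖δ‖_{2,n}`. Cauchy–Schwarz makes `-S̃` a subgradient of `√Q̂` at `β₀`,
so `√Q̂(β₀) - √Q̂(β̂) ≤ S̃·δ`, while minimality of `β̂` and `β₀ = 0` off `T` give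
`√Q̂(β̂) - √Q̂(β₀) ≤ (λ/n)(‖Γδ_T‖₁ - ‖Γδ_{Tᶜ}‖₁)`. Played against `|S̃·δ| ≤ (λ/(cn))‖Γδ‖₁`, these
put `δ` in the cone `Δ_c̄` and `β̂` in the ball `‖Γβ̂‖₁ ≤ c̄‖Γβ₀‖₁`, so `|S̃·δ| ≤ ϱ_c̄ t`, which is the
lower bound; the definition of `κ̃` turns the upper estimate into `ρ̄ t`. Finally the exact expansion
`Q̂(β̂) = Q̂(β₀) - 2√Q̂(β₀) S̃·δ + t²`, fed with both bounds, gives `(1 - ρ̄²) t ≤ 2√Q̂(β₀)(ϱ_c̄ + ρ̄)`.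
-/

open scoped BigOperators

theorem En_eq_expect (n : ℕ) (f : Fin n → ℝ) : En n f = 𝔼 i, f i := by
  rw [En, expect_eq_sum_div_card, card_univ, Fintype.card_fin]

theorem En_sq_nonneg (n : ℕ) (a : Fin n → ℝ) : 0 ≤ En n fun i => a i ^ 2 := by
  rw [En_eq_expect]; positivity

theorem abs_En_mul_le (n : ℕ) (a b : Fin n → ℝ) :
    |En n fun i => a i * b i| ≤ √(En n fun i => a i ^ 2) * √(En n fun i => b i ^ 2) := by
  rw [← Real.sqrt_mul (by simp only [En_eq_expect]; positivity)]
  simp only [En_eq_expect]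
  exact Real.abs_le_sqrt (expect_mul_sq_le_sq_mul_sq _ _ _)

theorem En_sub_sq (n : ℕ) (a b : Fin n → ℝ) :
    (En n fun i => (a i - b i) ^ 2) =
      (En n fun i => a i ^ 2) - 2 * (En n fun i => a i * b i) + En n fun i => b i ^ 2 := by
  simp only [En, mul_div_assoc', ← sub_div, ← add_div, mul_sum, ← sum_sub_distrib, ← sum_add_distrib]
  congr 1; exact sum_congr rfl fun i _ => by ring

theorem En_mul_sub (n : ℕ) (a b : Fin n → ℝ) :
    (En n fun i => a i * (a i - b i)) = (En n fun i => a i ^ 2) - En n fun i => a i * b i := by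
  simp only [En, ← sub_div, ← sum_sub_distrib]
  congr 1; exact sum_congr rfl fun i _ => by ring

theorem sqrt_En_sq_sub_le {n : ℕ} {a : Fin n → ℝ} (ha : 0 < En n fun i => a i ^ 2)
    (b : Fin n → ℝ) :
    √(En n fun i => a i ^ 2) - √(En n fun i => (a i - b i) ^ 2) ≤
      (En n fun i => a i * b i) / √(En n fun i => a i ^ 2) := by
  rw [le_div_iff₀ (Real.sqrt_pos.2 ha)]
  have hcs := (le_abs_self _).trans (abs_En_mul_le n a (fun i => a i - b i))
  rw [En_mul_sub] at hcs
  nlinarith [Real.mul_self_sqrt ha.le]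

theorem dot_sub {p : ℕ} (a b c : Fin p → ℝ) : dot a (b - c) = dot a b - dot a c := by
  simp only [dot, Pi.sub_apply, mul_sub, sum_sub_distrib]

theorem dot_zero {p : ℕ} (a : Fin p → ℝ) : dot a 0 = 0 := by
  simp [dot]

theorem predNorm_nonneg (n : ℕ) {p : ℕ} (x : Fin n → Fin p → ℝ) (δ : Fin p → ℝ) :
    0 ≤ predNorm n x δ :=
  Real.sqrt_nonneg _

theorem predNorm_zero (n : ℕ) {p : ℕ} (x : Fin n → Fin p → ℝ) : predNorm n x 0 = 0 := by
  simp [predNorm, dot_zero, En]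

theorem Qhat_nonneg (n : ℕ) {p : ℕ} (x : Fin n → Fin p → ℝ) (y : Fin n → ℝ) (β : Fin p → ℝ) :
    0 ≤ Qhat n x y β :=
  En_sq_nonneg n _

section Score

variable {n p : ℕ} (x : Fin n → Fin p → ℝ) (ε rr : Fin n → ℝ) (σ : ℝ)

theorem dot_score (w : Fin p → ℝ) :
    dot (score n x ε rr σ) w =
      (En n fun i => (σ * ε i + rr i) * dot (x i) w) / √(En n fun i => (σ * ε i + rr i) ^ 2) := by
  simp only [dot, score, En, div_mul_eq_mul_div, ← sum_div, sum_mul, mul_sum]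
  rw [sum_comm]
  congr 2; exact sum_congr rfl fun i _ => sum_congr rfl fun j _ => by ring

theorem abs_dot_score_le_predNorm (w : Fin p → ℝ) :
    |dot (score n x ε rr σ) w| ≤ predNorm n x w := by
  rw [dot_score, abs_div, abs_of_nonneg (Real.sqrt_nonneg _)]
  refine div_le_of_le_mul₀ (Real.sqrt_nonneg _) (Real.sqrt_nonneg _) ?_
  rw [mul_comm]
  exact abs_En_mul_le n _ _

variable {x ε rr σ} {y : Fin n → ℝ} {β₀ : Fin p → ℝ}

theorem Qhat_eq (hy : ∀ i, y i = dot (x i) β₀ + σ * ε i + rr i) (β : Fin p → ℝ) :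
    Qhat n x y β = En n fun i => (σ * ε i + rr i - dot (x i) (β - β₀)) ^ 2 := by
  simp only [Qhat, hy, dot_sub]
  congr 1; funext i; ring

theorem sqrt_Qhat_sub_le_dot_score (hy : ∀ i, y i = dot (x i) β₀ + σ * ε i + rr i)
    (hQ : 0 < En n fun i => (σ * ε i + rr i) ^ 2) (β : Fin p → ℝ) :
    √(Qhat n x y β₀) - √(Qhat n x y β) ≤ dot (score n x ε rr σ) (β - β₀) := by
  rw [Qhat_eq hy, Qhat_eq hy, sub_self, dot_score]
  simpa only [dot_zero, sub_zero] using sqrt_En_sq_sub_le hQ _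

theorem Qhat_eq_sub_add (hy : ∀ i, y i = dot (x i) β₀ + σ * ε i + rr i)
    (hQ : 0 < En n fun i => (σ * ε i + rr i) ^ 2) (β : Fin p → ℝ) :
    Qhat n x y β = Qhat n x y β₀ - 2 * √(Qhat n x y β₀) * dot (score n x ε rr σ) (β - β₀) +
      predNorm n x (β - β₀) ^ 2 := by
  rw [Qhat_eq hy, Qhat_eq hy, sub_self, dot_score, predNorm, Real.sq_sqrt (En_sq_nonneg _ _),
    En_sub_sq]
  simp only [dot_zero, sub_zero]
  field_simp [(Real.sqrt_pos.2 hQ).ne']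

end Score

theorem abs_dot_le_iSup_mul_l1 {p : ℕ} {γ : Fin p → ℝ} (hγ : ∀ j, 0 < γ j) (S w : Fin p → ℝ) :
    |dot S w| ≤ (⨆ j, |S j| / γ j) * l1 (scl γ w) := by
  calc |dot S w| ≤ ∑ j, |S j| * |w j| := by
        simpa only [dot, abs_mul] using abs_sum_le_sum_abs (fun j => S j * w j) univ
    _ = ∑ j, |S j| / γ j * |scl γ w j| := sum_congr rfl fun j _ => by
        rw [scl, abs_mul, abs_of_pos (hγ j)]; field_simp [(hγ j).ne']
    _ ≤ ∑ j, (⨆ k, |S k| / γ k) * |scl γ w j| := sum_le_sum fun j _ =>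
        mul_le_mul_of_nonneg_right
          (le_ciSup (f := fun k => |S k| / γ k) (Set.finite_range _).bddAbove j) (abs_nonneg _)
    _ = (⨆ j, |S j| / γ j) * l1 (scl γ w) := by rw [l1, mul_sum]

theorem abs_dot_le_div_mul_l1 {p : ℕ} {γ S : Fin p → ℝ} {c L : ℝ} (hγ : ∀ j, 0 < γ j)
    (hc : 0 < c) (hdom : c * ⨆ j, |S j| / γ j ≤ L) (w : Fin p → ℝ) :
    |dot S w| ≤ L / c * l1 (scl γ w) :=
  (abs_dot_le_iSup_mul_l1 hγ S w).trans <|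
    mul_le_mul_of_nonneg_right ((le_div_iff₀' hc).2 hdom) (sum_nonneg fun _ _ => abs_nonneg _)

section WeightedL1
variable {p : ℕ} (γ : Fin p → ℝ)

theorem l1_scl_restr_add_restr_compl (T : Finset (Fin p)) (v : Fin p → ℝ) :
    l1 (scl γ (restr T v)) + l1 (scl γ (restr Tᶜ v)) = l1 (scl γ v) := by
  simp only [l1, scl, restr, ← sum_add_distrib, mem_compl]
  exact sum_congr rfl fun j _ => by by_cases h : j ∈ T <;> simp [h]

theorem l1_scl_sub_le_add (a b : Fin p → ℝ) :
    l1 (scl γ (a - b)) ≤ l1 (scl γ a) + l1 (scl γ b) := by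
  simp only [l1, scl, Pi.sub_apply, ← sum_add_distrib, mul_sub]
  exact sum_le_sum fun j _ => abs_sub _ _

theorem l1_scl_sub_le {T : Finset (Fin p)} {β₀ : Fin p → ℝ} (hβ₀ : ∀ j ∉ T, β₀ j = 0)
    (β : Fin p → ℝ) :
    l1 (scl γ β₀) - l1 (scl γ β) ≤
      l1 (scl γ (restr T (β - β₀))) - l1 (scl γ (restr Tᶜ (β - β₀))) := by
  simp only [l1, scl, restr, mem_compl, ← sum_sub_distrib]
  refine sum_le_sum fun j _ => ?_
  by_cases h : j ∈ T
  · simpa [h, mul_sub, abs_sub_comm] using abs_sub_abs_le_abs_sub (γ j * β₀ j) (γ j * β j)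
  · simp [h, hβ₀ j h]

end WeightedL1

theorem le_div_mul_of_mul_sub_le {L c u v : ℝ} (hL : 0 < L) (hc : 1 < c)
    (h : L * (u - v) ≤ L / c * (u + v)) : u ≤ (c + 1) / (c - 1) * v := by
  rw [div_mul_eq_mul_div, le_div_iff₀ (by linarith)]
  rw [div_mul_eq_mul_div, le_div_iff₀ (one_pos.trans hc)] at h
  nlinarith

section RestrictedConstants
variable {n p : ℕ} {x : Fin n → Fin p → ℝ} {γ : Fin p → ℝ} {T : Finset (Fin p)}

theorem mul_l1_sub_le_of_kappaTilde_pos {L : ℝ} (hL : 0 ≤ L) (hκ : 0 < kappaTilde n x γ T)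
    (δ : Fin p → ℝ) :
    L * (l1 (scl γ (restr T δ)) - l1 (scl γ (restr Tᶜ δ))) ≤
      L * √T.card / kappaTilde n x γ T * predNorm n x δ := by
  by_cases hδ : l1 (scl γ (restr Tᶜ δ)) < l1 (scl γ (restr T δ))
  · have hinf : kappaTilde n x γ T ≤ √T.card * predNorm n x δ /
        (l1 (scl γ (restr T δ)) - l1 (scl γ (restr Tᶜ δ))) := by
      refine csInf_le ⟨0, ?_⟩ ⟨δ, hδ, rfl⟩
      rintro r ⟨δ', hδ', rfl⟩
      exact div_nonneg (mul_nonneg (Real.sqrt_nonneg _) (predNorm_nonneg n x δ')) (sub_pos.2 hδ').le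
    rw [le_div_iff₀ (sub_pos.2 hδ), mul_comm, ← le_div_iff₀ hκ] at hinf
    calc _ ≤ L * (√T.card * predNorm n x δ / kappaTilde n x γ T) := by gcongr
      _ = _ := by ring
  · exact (mul_nonpos_of_nonneg_of_nonpos hL (sub_nonpos.2 (not_lt.1 hδ))).trans <|
      mul_nonneg (div_nonneg (mul_nonneg hL (Real.sqrt_nonneg _)) hκ.le) (predNorm_nonneg n x δ)

variable {β₀ S : Fin p → ℝ} {cb : ℝ}

theorem varrho_nonneg : 0 ≤ varrho n x γ T β₀ S cb :=
  Real.sSup_nonneg (by rintro r ⟨δ, -, hδ, -, rfl⟩; positivity)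

theorem abs_dot_le_varrho_mul (hS : ∀ w, |dot S w| ≤ predNorm n x w) {δ : Fin p → ℝ}
    (hδ : l1 (scl γ (restr Tᶜ δ)) ≤ cb * l1 (scl γ (restr T δ)))
    (hβ : l1 (scl γ (δ + β₀)) ≤ cb * l1 (scl γ β₀)) :
    |dot S δ| ≤ varrho n x γ T β₀ S cb * predNorm n x δ := by
  rcases (predNorm_nonneg n x δ).eq_or_lt with h | h
  · simpa [← h] using hS δ
  have hne : δ ≠ 0 := by rintro rfl; simp only [predNorm_zero, lt_irrefl] at h
  rw [← div_le_iff₀ h]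
  refine le_csSup ⟨1, ?_⟩ ⟨δ, ⟨hne, hδ⟩, h, hβ, rfl⟩
  rintro r ⟨δ', -, hδ', -, rfl⟩
  exact (div_le_one hδ').2 (hS δ')

end RestrictedConstants

theorem le_div_one_sub_sq_of_sq_eq {q₀ q t s ϱ ρ : ℝ} (hq₀ : 0 ≤ q₀) (hq : 0 ≤ q) (ht : 0 ≤ t)
    (hϱ : 0 ≤ ϱ) (hρ₀ : 0 ≤ ρ) (hρ : ρ < 1) (hup : q - q₀ ≤ ρ * t) (hs : s ≤ ϱ * t)
    (hsq : q ^ 2 = q₀ ^ 2 - 2 * q₀ * s + t ^ 2) :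
    t ≤ 2 * q₀ * (ϱ + ρ) / (1 - ρ ^ 2) := by
  have hρ2 : 0 < 1 - ρ ^ 2 := by nlinarith
  have hdiff : q ^ 2 - q₀ ^ 2 ≤ ρ ^ 2 * t ^ 2 + 2 * q₀ * (ρ * t) := by
    rcases le_total q₀ q with h | h <;> nlinarith [mul_nonneg hρ₀ ht]
  rw [le_div_iff₀ hρ2]
  rcases ht.eq_or_lt with h | h
  · rw [← h, zero_mul]; positivity
  · nlinarith [mul_le_mul_of_nonneg_left hs hq₀]

def IsSqrtLassoMin (n : ℕ) {p : ℕ} (x : Fin n → Fin p → ℝ) (y : Fin n → ℝ) (γ : Fin p → ℝ)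
    (L : ℝ) (βh : Fin p → ℝ) : Prop :=
  ∀ β, √(Qhat n x y βh) + L * l1 (scl γ βh) ≤ √(Qhat n x y β) + L * l1 (scl γ β)

namespace IsSqrtLassoMin
variable {n p : ℕ} {x : Fin n → Fin p → ℝ} {y : Fin n → ℝ} {γ β₀ βh S : Fin p → ℝ}
  {T : Finset (Fin p)} {L c : ℝ}

theorem sqrt_Qhat_sub_le (hmin : IsSqrtLassoMin n x y γ L βh) (hL : 0 ≤ L)
    (hβ₀ : ∀ j ∉ T, β₀ j = 0) :
    √(Qhat n x y βh) - √(Qhat n x y β₀) ≤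
      L * (l1 (scl γ (restr T (βh - β₀))) - l1 (scl γ (restr Tᶜ (βh - β₀)))) := by
  linarith [hmin β₀, mul_le_mul_of_nonneg_left (l1_scl_sub_le γ hβ₀ βh) hL]

theorem sqrt_Qhat_sub_le_mul_predNorm (hmin : IsSqrtLassoMin n x y γ L βh) (hL : 0 ≤ L)
    (hβ₀ : ∀ j ∉ T, β₀ j = 0) (hκ : 0 < kappaTilde n x γ T) :
    √(Qhat n x y βh) - √(Qhat n x y β₀) ≤
      L * √T.card / kappaTilde n x γ T * predNorm n x (βh - β₀) :=
  (hmin.sqrt_Qhat_sub_le hL hβ₀).trans (mul_l1_sub_le_of_kappaTilde_pos hL hκ _)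

theorem mem_cone (hmin : IsSqrtLassoMin n x y γ L βh) (hL : 0 < L) (hc : 1 < c)
    (hβ₀ : ∀ j ∉ T, β₀ j = 0)
    (hlow : √(Qhat n x y β₀) - √(Qhat n x y βh) ≤ dot S (βh - β₀))
    (hS : ∀ w, |dot S w| ≤ L / c * l1 (scl γ w)) :
    l1 (scl γ (restr Tᶜ (βh - β₀))) ≤ (c + 1) / (c - 1) * l1 (scl γ (restr T (βh - β₀))) := by
  refine le_div_mul_of_mul_sub_le hL hc ?_
  have hS' := hS (βh - β₀)
  rw [← l1_scl_restr_add_restr_compl γ T] at hS'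
  linarith [hmin.sqrt_Qhat_sub_le hL.le hβ₀, le_abs_self (dot S (βh - β₀))]

theorem l1_scl_le (hmin : IsSqrtLassoMin n x y γ L βh) (hL : 0 < L) (hc : 1 < c)
    (hlow : √(Qhat n x y β₀) - √(Qhat n x y βh) ≤ dot S (βh - β₀))
    (hS : ∀ w, |dot S w| ≤ L / c * l1 (scl γ w)) :
    l1 (scl γ βh) ≤ (c + 1) / (c - 1) * l1 (scl γ β₀) := by
  refine le_div_mul_of_mul_sub_le hL hc ?_
  linarith [hmin β₀, hS (βh - β₀), le_abs_self (dot S (βh - β₀)),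
    mul_le_mul_of_nonneg_left (l1_scl_sub_le_add γ βh β₀) (div_pos hL (one_pos.trans hc)).le]

theorem abs_dot_le_varrho_mul (hmin : IsSqrtLassoMin n x y γ L βh) (hL : 0 < L) (hc : 1 < c)
    (hβ₀ : ∀ j ∉ T, β₀ j = 0)
    (hlow : √(Qhat n x y β₀) - √(Qhat n x y βh) ≤ dot S (βh - β₀))
    (hS : ∀ w, |dot S w| ≤ L / c * l1 (scl γ w))
    (hS₂ : ∀ w, |dot S w| ≤ predNorm n x w) :
    |dot S (βh - β₀)| ≤ varrho n x γ T β₀ S ((c + 1) / (c - 1)) * predNorm n x (βh - β₀) :=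
  SqrtLasso.abs_dot_le_varrho_mul hS₂ (hmin.mem_cone hL hc hβ₀ hlow hS)
    (by rw [sub_add_cancel]; exact hmin.l1_scl_le hL hc hlow hS)

end IsSqrtLassoMin

theorem statement_8_general (n p : ℕ) (hn : 1 ≤ n)
    (x : Fin n → Fin p → ℝ) (β₀ γ : Fin p → ℝ) (hγ : ∀ j, 1 ≤ γ j)
    (σ : ℝ) (ε rr : Fin n → ℝ) (y : Fin n → ℝ)
    (hy : ∀ i, y i = dot (x i) β₀ + σ * ε i + rr i)
    (hQ : 0 < En n fun i => (σ * ε i + rr i) ^ 2)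
    (lam : ℝ) (hlam : 0 < lam)
    (c : ℝ) (hc : 1 < c)
    (hdom : c * scoreSup n x ε rr σ γ ≤ lam / n)
    (βh : Fin p → ℝ)
    (hmin : ∀ β : Fin p → ℝ,
      Real.sqrt (Qhat n x y βh) + lam / n * l1 (scl γ βh) ≤
        Real.sqrt (Qhat n x y β) + lam / n * l1 (scl γ β))
    (hκ : 0 < kappaTilde n x γ (supp β₀))
    (ρ : ℝ)
    (hρdef : ρ = lam * Real.sqrt (supp β₀).card / (n * kappaTilde n x γ (supp β₀)))
    (hρ : ρ < 1) :
    -(varrho n x γ (supp β₀) β₀ (score n x ε rr σ) ((c + 1) / (c - 1)) *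
          predNorm n x (βh - β₀)) ≤
        Real.sqrt (Qhat n x y βh) - Real.sqrt (Qhat n x y β₀) ∧
      Real.sqrt (Qhat n x y βh) - Real.sqrt (Qhat n x y β₀) ≤ ρ * predNorm n x (βh - β₀) ∧
      -(2 * varrho n x γ (supp β₀) β₀ (score n x ε rr σ) ((c + 1) / (c - 1)) *
            Real.sqrt (Qhat n x y β₀) *
            ((varrho n x γ (supp β₀) β₀ (score n x ε rr σ) ((c + 1) / (c - 1)) + ρ) /
              (1 - ρ ^ 2))) ≤
        Real.sqrt (Qhat n x y βh) - Real.sqrt (Qhat n x y β₀) ∧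
      Real.sqrt (Qhat n x y βh) - Real.sqrt (Qhat n x y β₀) ≤
        2 * ρ * Real.sqrt (Qhat n x y β₀) *
          ((varrho n x γ (supp β₀) β₀ (score n x ε rr σ) ((c + 1) / (c - 1)) + ρ) /
            (1 - ρ ^ 2)) := by
  set ϱ := varrho n x γ (supp β₀) β₀ (score n x ε rr σ) ((c + 1) / (c - 1))
  set t := predNorm n x (βh - β₀)
  have hmin : IsSqrtLassoMin n x y γ (lam / n) βh := hmin
  have hL : 0 < lam / n := div_pos hlam (by exact_mod_cast hn)
  have hβ₀ : ∀ j ∉ supp β₀, β₀ j = 0 := fun j hj => by simpa [supp] using hj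
  have hlow := sqrt_Qhat_sub_le_dot_score hy hQ βh
  have hϱ : |dot (score n x ε rr σ) (βh - β₀)| ≤ ϱ * t :=
    hmin.abs_dot_le_varrho_mul hL hc hβ₀ hlow
      (abs_dot_le_div_mul_l1 (fun j => one_pos.trans_le (hγ j)) (one_pos.trans hc) hdom)
      (abs_dot_score_le_predNorm x ε rr σ)
  have hlower : -(ϱ * t) ≤ √(Qhat n x y βh) - √(Qhat n x y β₀) := by
    linarith [le_abs_self (dot (score n x ε rr σ) (βh - β₀))]
  have hupper : √(Qhat n x y βh) - √(Qhat n x y β₀) ≤ ρ * t :=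
    (hmin.sqrt_Qhat_sub_le_mul_predNorm hL.le hβ₀ hκ).trans_eq (by rw [hρdef]; ring)
  have hρ₀ : 0 ≤ ρ := hρdef ▸ by positivity
  have ht : t ≤ 2 * √(Qhat n x y β₀) * (ϱ + ρ) / (1 - ρ ^ 2) :=
    le_div_one_sub_sq_of_sq_eq (Real.sqrt_nonneg _) (Real.sqrt_nonneg _) (predNorm_nonneg n x _)
      varrho_nonneg hρ₀ hρ hupper ((le_abs_self _).trans hϱ) <| by
        rw [Real.sq_sqrt (Qhat_nonneg ..), Real.sq_sqrt (Qhat_nonneg ..)]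
        exact Qhat_eq_sub_add hy hQ βh
  refine ⟨hlower, hupper, ?_, ?_⟩
  · calc _ = -(ϱ * (2 * √(Qhat n x y β₀) * (ϱ + ρ) / (1 - ρ ^ 2))) := by ring
      _ ≤ -(ϱ * t) := neg_le_neg (mul_le_mul_of_nonneg_left ht varrho_nonneg)
      _ ≤ _ := hlower
  · calc _ ≤ ρ * t := hupper
      _ ≤ ρ * (2 * √(Qhat n x y β₀) * (ϱ + ρ) / (1 - ρ ^ 2)) := mul_le_mul_of_nonneg_left ht hρ₀
      _ = _ := by ring

/-- Theorem 4, estimation of `Q̂(β₀)`. -/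
theorem statement_8 (n p : ℕ) (hn : 1 ≤ n) (hp : 1 ≤ p)
    (x : Fin n → Fin p → ℝ) (β₀ γ : Fin p → ℝ) (hγ : ∀ j, 1 ≤ γ j)
    (hs : 1 ≤ (supp β₀).card)
    (σ : ℝ) (hσ : 0 ≤ σ) (ε rr : Fin n → ℝ) (y : Fin n → ℝ)
    (hy : ∀ i, y i = dot (x i) β₀ + σ * ε i + rr i)
    (hQ : 0 < En n fun i => (σ * ε i + rr i) ^ 2)
    (lam : ℝ) (hlam : 0 < lam)
    (c : ℝ) (hc : 1 < c)
    (hdom : c * scoreSup n x ε rr σ γ ≤ lam / n)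
    (βh : Fin p → ℝ)
    (hmin : ∀ β : Fin p → ℝ,
      Real.sqrt (Qhat n x y βh) + lam / n * l1 (scl γ βh) ≤
        Real.sqrt (Qhat n x y β) + lam / n * l1 (scl γ β))
    (hκ : 0 < kappaTilde n x γ (supp β₀))
    (ρ : ℝ)
    (hρdef : ρ = lam * Real.sqrt (supp β₀).card / (n * kappaTilde n x γ (supp β₀)))
    (hρ : ρ < 1) :
    -(varrho n x γ (supp β₀) β₀ (score n x ε rr σ) ((c + 1) / (c - 1)) *
          predNorm n x (βh - β₀)) ≤
        Real.sqrt (Qhat n x y βh) - Real.sqrt (Qhat n x y β₀) ∧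
      Real.sqrt (Qhat n x y βh) - Real.sqrt (Qhat n x y β₀) ≤ ρ * predNorm n x (βh - β₀) ∧
      -(2 * varrho n x γ (supp β₀) β₀ (score n x ε rr σ) ((c + 1) / (c - 1)) *
            Real.sqrt (Qhat n x y β₀) *
            ((varrho n x γ (supp β₀) β₀ (score n x ε rr σ) ((c + 1) / (c - 1)) + ρ) /
              (1 - ρ ^ 2))) ≤
        Real.sqrt (Qhat n x y βh) - Real.sqrt (Qhat n x y β₀) ∧
      Real.sqrt (Qhat n x y βh) - Real.sqrt (Qhat n x y β₀) ≤
        2 * ρ * Real.sqrt (Qhat n x y β₀) *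
          ((varrho n x γ (supp β₀) β₀ (score n x ε rr σ) ((c + 1) / (c - 1)) + ρ) /
            (1 - ρ ^ 2)) :=
  statement_8_general n p hn x β₀ γ hγ σ ε rr y hy hQ lam hlam c hc hdom βh hmin hκ ρ hρdef hρ

end SqrtLasso
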